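/- The von Dyck group G₀(2,3,6), i.e. the presented group ⟨x, y, z ∣ x² = y³ = z⁶ = xyz = 1⟩ (the quotient of the free group on three generators x, y, z by the normal closure of the relators x², y³, z⁶, xyz), has Grossman's Property A. -/

import Mathlib

/-!
The group `⟨x, y, z ∣ x², y³, z⁶, xyz⟩` is the wallpaper group p6 `= ℤ[ζ] ⋊ μ₆`, `ζ = e^{iπ/3}`:
`x` acts as the half-turn about `1/2` and `z` as multiplication by `ζ`. Since `μ₆` is abelian, a
class-preserving automorphism `Φ` of p6 preserves the rotation part of every element. Hence it
restricts to an additive map of `ℤ[ζ]` sending every vector to a rotate of itself, and testing on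
`1, ζ, 1 + ζ, 2 + ζ` shows that this map is multiplication by a single `ζᵏ`. Finally `Φ z = t_w z`
for a translation `t_w`; as `1 - ζ` is a unit (`ζ² = ζ - 1`), conjugation by `t_{ζw} ζᵏ` agrees
with `Φ` on the translations and on `z`.
-/

/-- A group `G` has Grossman's Property A if every class-preserving automorphism
(i.e. one sending each element to a conjugate of itself) is inner. -/
def HasPropertyA (G : Type*) [Group G] : Prop :=
  ∀ φ : G ≃* G, (∀ g : G, IsConj g (φ g)) → ∃ h : G, ∀ g : G, φ g = h * g * h⁻¹

/-- The relators of the von Dyck group `G₀(p,q,r) = ⟨x, y, z ∣ xᵖ = y^q = z^r = xyz = 1⟩`. -/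
def vonDyckRels (p q r : ℕ) : Set (FreeGroup (Fin 3)) :=
  {(FreeGroup.of 0) ^ p, (FreeGroup.of 1) ^ q, (FreeGroup.of 2) ^ r,
    FreeGroup.of 0 * FreeGroup.of 1 * FreeGroup.of 2}

open Multiplicative SemidirectProduct

theorem HasPropertyA.of_mulEquiv {G H : Type*} [Group G] [Group H] (e : G ≃* H)
    (hG : HasPropertyA G) : HasPropertyA H := by
  intro φ hφ
  obtain ⟨h, hh⟩ := hG ((e.trans φ).trans e.symm) fun g ↦ by
    simpa using e.symm.toMonoidHom.map_isConj (hφ (e g))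
  refine ⟨e h, fun g ↦ ?_⟩
  simpa using congrArg e (hh (e.symm g))

def zmodPowersHom {M : Type*} [Monoid M] (n : ℕ) [NeZero n] (g : M) (hg : g ^ n = 1) :
    Multiplicative (ZMod n) →* M where
  toFun k := g ^ (toAdd k).val
  map_one' := by simp
  map_mul' k l := by rw [toAdd_mul, ZMod.val_add, ← pow_add, ← pow_eq_pow_mod _ hg]

theorem MonoidHom.ext_mzmod {M : Type*} [Monoid M] {n : ℕ} [NeZero n]
    {f g : Multiplicative (ZMod n) →* M} (h : f (ofAdd 1) = g (ofAdd 1)) : f = g := by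
  refine MonoidHom.ext fun k ↦ ?_
  have hk : k = ofAdd 1 ^ (toAdd k : ZMod n).val := by
    rw [← ofAdd_nsmul, nsmul_one, ZMod.natCast_zmod_val, ofAdd_toAdd]
  rw [hk, map_pow, map_pow, h]

namespace SemidirectProduct

variable {N G : Type*}

theorem right_eq_of_isConj [Group N] [CommGroup G] {φ : G →* MulAut N} {a b : N ⋊[φ] G}
    (h : IsConj a b) : a.right = b.right :=
  isConj_iff_eq.mp (rightHom.map_isConj h)

theorem conj_inl [CommGroup N] [Group G] {φ : G →* MulAut N} (c : N ⋊[φ] G) (n : N) :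
    c * inl n * c⁻¹ = inl (φ c.right n) := by
  calc c * inl n * c⁻¹
      = inl c.left * (inr c.right * inl n * inr c.right⁻¹) * (inl c.left)⁻¹ := by
        conv_lhs => rw [← inl_left_mul_inr_right c]
        simp only [mul_inv_rev, map_inv, mul_assoc]
    _ = inl (φ c.right n) := by
        rw [← inl_aut, ← map_inv, ← map_mul, ← map_mul, mul_inv_cancel_comm]

theorem exists_eq_inl_of_isConj_inl [CommGroup N] [Group G] {φ : G →* MulAut N}
    {n : N} {a : N ⋊[φ] G} (h : IsConj (inl n) a) : ∃ g, a = inl (φ g n) := by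
  obtain ⟨c, rfl⟩ := isConj_iff.mp h
  exact ⟨c.right, conj_inl c n⟩

theorem exists_monoidHom_of_forall_isConj [CommGroup N] [Group G]
    {φ : G →* MulAut N} (Φ : N ⋊[φ] G ≃* N ⋊[φ] G) (hΦ : ∀ a, IsConj a (Φ a)) :
    ∃ f : N →* N, (∀ n, Φ (inl n) = inl (f n)) ∧ ∀ n, ∃ g, f n = φ g n := by
  choose g hg using fun n ↦ exists_eq_inl_of_isConj_inl (hΦ (inl n))
  refine ⟨{ toFun n := φ (g n) n, map_one' := ?_, map_mul' := fun n m ↦ ?_ }, hg,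
    fun n ↦ ⟨g n, rfl⟩⟩
  · apply inl_injective (φ := φ)
    rw [← hg, map_one, map_one]
  · apply inl_injective (φ := φ)
    rw [map_mul inl, ← hg, ← hg, ← hg, map_mul, map_mul]

end SemidirectProduct

namespace VonDyck236

/-- `(a, b)` stands for the Eisenstein integer `a + bζ`, written multiplicatively so that it can be
the normal factor of a `SemidirectProduct`; `rot` is multiplication by `ζ`. -/
abbrev HexLattice := Multiplicative ℤ × Multiplicative ℤ

namespace HexLattice

def u : HexLattice := (ofAdd 1, 1)
def v : HexLattice := (1, ofAdd 1)

theorem hom_ext {M : Type*} [Monoid M] {f g : HexLattice →* M} (hu : f u = g u)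
    (hv : f v = g v) : f = g := by
  have hl : f.comp (MonoidHom.inl _ _) = g.comp (MonoidHom.inl _ _) := MonoidHom.ext_mint hu
  have hr : f.comp (MonoidHom.inr _ _) = g.comp (MonoidHom.inr _ _) := MonoidHom.ext_mint hv
  refine MonoidHom.ext fun w ↦ ?_
  rw [← Prod.fst_mul_snd w, map_mul, map_mul]
  exact congr($(DFunLike.congr_fun hl w.1) * $(DFunLike.congr_fun hr w.2))

def rot : MulAut HexLattice where
  toFun w := (w.2⁻¹, w.1 * w.2)
  invFun w := (w.1 * w.2, w.1⁻¹)
  left_inv w := by ext <;> simp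
  right_inv w := by ext <;> simp
  map_mul' w w' := by ext <;> simp [mul_comm, mul_left_comm]

theorem rot_rot (w : HexLattice) : rot (rot w) = rot w * w⁻¹ := by
  ext <;> simp [rot, mul_comm]

theorem rot_pow_six : rot ^ 6 = 1 := by
  ext w <;> simp [pow_succ, rot]

theorem rot_mul_inv_rot_rot (w : HexLattice) : rot w * (rot (rot w))⁻¹ = w := by
  rw [rot_rot, mul_inv_rev, inv_inv, mul_left_comm, mul_inv_cancel, mul_one]

end HexLattice

open HexLattice

abbrev Rot := Multiplicative (ZMod 6)

def act : Rot →* MulAut HexLattice := zmodPowersHom 6 rot rot_pow_six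

abbrev P6 := HexLattice ⋊[act] Rot

/-- A check of all `6⁴` cases; the vector `2u + v` is what rules out the reflection fixing `u`. -/
theorem act_rigid_on_basis : ∀ a b c d : Rot, act c (u * v) = act a u * act b v →
    act d (u * (u * v)) = act a u * act c (u * v) → act b v = act a v := by
  decide

theorem exists_eq_act_of_forall_exists {f : HexLattice →* HexLattice}
    (hf : ∀ w, ∃ k, f w = act k w) : ∃ k, f = (act k).toMonoidHom := by
  obtain ⟨a, ha⟩ := hf u
  obtain ⟨b, hb⟩ := hf v
  obtain ⟨c, hc⟩ := hf (u * v)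
  obtain ⟨d, hd⟩ := hf (u * (u * v))
  have hab := act_rigid_on_basis a b c d (by rw [← hc, map_mul, ha, hb])
    (by rw [← hd, map_mul, ha, hc])
  exact ⟨a, hom_ext ha (hb.trans hab)⟩

theorem act_ofAdd_one : act (ofAdd 1) = rot := pow_one rot

theorem conj_inr_ofAdd_one (p : HexLattice) (k : Rot) :
    (inl p * inr k : P6) * inr (ofAdd 1) * (inl p * inr k)⁻¹ =
      inl (p * (rot p)⁻¹) * inr (ofAdd 1) := by
  have hk : (inr k : P6) * inr (ofAdd 1) * (inr k)⁻¹ = inr (ofAdd 1) := by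
    rw [← map_inv, ← map_mul, ← map_mul, mul_inv_cancel_comm]
  calc (inl p * inr k : P6) * inr (ofAdd 1) * (inl p * inr k)⁻¹
      = inl p * (inr k * inr (ofAdd 1) * (inr k)⁻¹) * (inl p)⁻¹ := by group
    _ = inl p * (inr (ofAdd 1) * (inl p)⁻¹ * (inr (ofAdd 1))⁻¹) * inr (ofAdd 1) := by
        rw [hk]; group
    _ = inl (p * (rot p)⁻¹) * inr (ofAdd 1) := by
        rw [← map_inv inl, ← map_inv inr, ← inl_aut, act_ofAdd_one, map_inv, map_mul]

theorem hasPropertyA_p6 : HasPropertyA P6 := by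
  intro Φ hΦ
  obtain ⟨f, hΦf, hf⟩ := exists_monoidHom_of_forall_isConj Φ hΦ
  obtain ⟨k, rfl⟩ := exists_eq_act_of_forall_exists hf
  set w := (Φ (inr (ofAdd 1))).left
  have hΦr : Φ (inr (ofAdd 1)) = inl w * inr (ofAdd 1) := by
    conv_lhs => rw [← inl_left_mul_inr_right (Φ _), ← right_eq_of_isConj (hΦ _), right_inr]
  suffices hΦc : Φ.toMonoidHom = (MulAut.conj (inl (rot w) * inr k)).toMonoidHom from
    ⟨_, DFunLike.congr_fun hΦc⟩
  refine hom_ext (MonoidHom.ext fun n ↦ ?_) (MonoidHom.ext_mzmod ?_)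
  · simp [hΦf, conj_inl]
  · change Φ _ = inl (rot w) * inr k * inr (ofAdd 1) * (inl (rot w) * inr k)⁻¹
    rw [conj_inr_ofAdd_one, rot_mul_inv_rot_rot, hΦr]

local notation "Γ" => PresentedGroup (vonDyckRels 2 3 6)

def x : Γ := .of 0
def y : Γ := .of 1
def z : Γ := .of 2

theorem x_sq : x ^ 2 = 1 :=
  PresentedGroup.one_of_mem (x := FreeGroup.of 0 ^ 2) (by simp [vonDyckRels])

theorem y_pow_three : y ^ 3 = 1 :=
  PresentedGroup.one_of_mem (x := FreeGroup.of 1 ^ 3) (by simp [vonDyckRels])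

theorem z_pow_six : z ^ 6 = 1 :=
  PresentedGroup.one_of_mem (x := FreeGroup.of 2 ^ 6) (by simp [vonDyckRels])

theorem x_mul_y_mul_z : x * y * z = 1 :=
  PresentedGroup.one_of_mem (x := FreeGroup.of 0 * FreeGroup.of 1 * FreeGroup.of 2)
    (by simp [vonDyckRels])

theorem x_inv : x⁻¹ = x := inv_eq_of_mul_eq_one_right (by rw [← sq, x_sq])

theorem y_eq : y = x * z⁻¹ := by
  calc y = x⁻¹ * (x * y * z) * z⁻¹ := by group
    _ = x * z⁻¹ := by rw [x_mul_y_mul_z, x_inv, mul_one]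

theorem z_mul_x_mul_z : z * x * z = x * z⁻¹ * x⁻¹ := by
  calc z * x * z = (x * z⁻¹) ^ 3 * (z * x⁻¹ * z) := by
        rw [← y_eq, y_pow_three, one_mul, x_inv]
    _ = x * z⁻¹ * x := by rw [pow_succ, sq]; group
    _ = x * z⁻¹ * x⁻¹ := by rw [x_inv]

/- `toP6` sends `x` to the half-turn about `u/2` and `z` to the rotation `rot` about `0`, so `tu`
and `tv` are the translations by `u` and `v`. The tactic `group` does not merge `z * z` into `z ^ 2`;
this is what the explicit `sq` rewrites below are for. -/
def tu : Γ := x * z ^ 3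
def tv : Γ := z * x * z ^ 2

theorem z_mul_tu_mul_z_inv : z * tu * z⁻¹ = tv := by
  simp only [tu, tv]; group

theorem commute_tu_tv : Commute tu tv := by
  calc tu * tv = x * z ^ 6 * z⁻¹ * z⁻¹ * x⁻¹ * z ^ 2 := by
        rw [x_inv]; simp only [tu, tv]; group
    _ = (x * z⁻¹ * x⁻¹) * (x * z⁻¹ * x⁻¹) * z ^ 2 := by rw [z_pow_six]; group
    _ = (z * x * z) * (z * x * z) * z ^ 2 := by rw [z_mul_x_mul_z]
    _ = tv * tu := by simp only [tu, tv, pow_succ, pow_zero, one_mul, mul_assoc]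

theorem z_mul_tv_mul_z_inv : z * tv * z⁻¹ = tu⁻¹ * tv := by
  calc z * tv * z⁻¹ = z ^ 6 * (z⁻¹ * z⁻¹ * z⁻¹ * z⁻¹ * x⁻¹ * z) := by
        rw [x_inv]; simp only [tv, ← mul_assoc, ← sq]; group
    _ = z⁻¹ * z⁻¹ * z⁻¹ * x⁻¹ * (x * z⁻¹ * x⁻¹) * z := by rw [z_pow_six]; group
    _ = z⁻¹ * z⁻¹ * z⁻¹ * x⁻¹ * (z * x * z * z) := by rw [z_mul_x_mul_z]; group
    _ = tu⁻¹ * tv := by rw [mul_assoc (z * x), ← sq z]; simp only [tu, tv]; group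

def transl : HexLattice →* Γ :=
  (zpowersHom Γ tu).noncommCoprod (zpowersHom Γ tv) fun _ _ ↦ by
    exact commute_tu_tv.zpow_zpow _ _

theorem transl_u : transl u = tu := by
  change tu ^ (1 : ℤ) * tv ^ (0 : ℤ) = tu
  rw [zpow_one, zpow_zero, mul_one]

theorem transl_v : transl v = tv := by
  change tu ^ (0 : ℤ) * tv ^ (1 : ℤ) = tv
  rw [zpow_one, zpow_zero, one_mul]

theorem transl_rot (w : HexLattice) : transl (rot w) = z * transl w * z⁻¹ := by
  refine DFunLike.congr_fun (hom_ext (f := transl.comp rot.toMonoidHom)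
    (g := (MulAut.conj z).toMonoidHom.comp transl) ?_ ?_) w
  · have : rot u = v := by decide
    simp [this, transl_u, transl_v, z_mul_tu_mul_z_inv]
  · have : rot v = u⁻¹ * v := by decide
    simp [this, transl_u, transl_v, z_mul_tv_mul_z_inv]

theorem transl_rot_pow (n : ℕ) (w : HexLattice) :
    transl ((rot ^ n) w) = z ^ n * transl w * (z ^ n)⁻¹ := by
  induction n with
  | zero => simp
  | succ n ih => rw [pow_succ', MulAut.mul_apply, transl_rot, ih]; group

def rotPow : Rot →* Γ := zmodPowersHom 6 z z_pow_six

def ofP6 : P6 →* Γ :=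
  SemidirectProduct.lift transl rotPow fun _ ↦ MonoidHom.ext fun w ↦ transl_rot_pow _ w

def gens : Fin 3 → P6 := ![inl u * inr (ofAdd 3), inl u * inr (ofAdd 2), inr (ofAdd 1)]

theorem gens_rels : ∀ r ∈ vonDyckRels 2 3 6, FreeGroup.lift gens r = 1 := by
  rintro r (rfl | rfl | rfl | rfl) <;> decide

def toP6 : Γ →* P6 := PresentedGroup.toGroup gens_rels

theorem toP6_x : toP6 x = inl u * inr (ofAdd 3) := PresentedGroup.toGroup.of gens_rels
theorem toP6_y : toP6 y = inl u * inr (ofAdd 2) := PresentedGroup.toGroup.of gens_rels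
theorem toP6_z : toP6 z = inr (ofAdd 1) := PresentedGroup.toGroup.of gens_rels

theorem toP6_comp_ofP6 : toP6.comp ofP6 = MonoidHom.id P6 := by
  refine SemidirectProduct.hom_ext (hom_ext ?_ ?_) (MonoidHom.ext_mzmod ?_)
  · simp only [MonoidHom.comp_apply, ofP6, lift_inl, transl_u, tu, map_mul, map_pow, toP6_x,
      toP6_z]
    decide
  · simp only [MonoidHom.comp_apply, ofP6, lift_inl, transl_v, tv, map_mul, map_pow, toP6_x,
      toP6_z]
    decide
  · exact toP6_z

theorem ofP6_comp_toP6 : ofP6.comp toP6 = MonoidHom.id Γ := by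
  have hx : ofP6 (toP6 x) = x := by
    calc ofP6 (toP6 x) = x * z ^ 3 * z ^ 3 := by
          rw [toP6_x, map_mul, ofP6, lift_inl, lift_inr, transl_u]; rfl
      _ = x := by rw [mul_assoc, ← pow_add, z_pow_six, mul_one]
  have hy : ofP6 (toP6 y) = y := by
    calc ofP6 (toP6 y) = x * z ^ 6 * z⁻¹ := by
          rw [toP6_y, map_mul, ofP6, lift_inl, lift_inr, transl_u]
          change x * z ^ 3 * z ^ 2 = _
          group
      _ = y := by rw [z_pow_six, mul_one, y_eq]
  have hz : ofP6 (toP6 z) = z := by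
    rw [toP6_z, ofP6, lift_inr]
    exact pow_one z
  refine PresentedGroup.ext fun i ↦ ?_
  fin_cases i
  exacts [hx, hy, hz]

def equivP6 : P6 ≃* Γ := ofP6.toMulEquiv toP6 toP6_comp_ofP6 ofP6_comp_toP6

end VonDyck236

theorem vonDyck_236_propertyA : HasPropertyA (PresentedGroup (vonDyckRels 2 3 6)) :=
  VonDyck236.hasPropertyA_p6.of_mulEquiv VonDyck236.equivP6
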